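/- The function f : ℕ × ℕ → ℂ given by f(n,m) = n + i·m satisfies: (i) the cross-ratio equation (f(n,m) − f(n+1,m))·(f(n+1,m+1) − f(n,m+1)) = −(f(n+1,m) − f(n+1,m+1))·(f(n,m+1) − f(n,m)) for all n, m ≥ 0, with all four differences nonzero; (ii) the constraint with a = 1: f(n,m) = 2n·(f(n+1,m) − f(n,m))·(f(n,m) − f(n−1,m))/(f(n+1,m) − f(n−1,m)) + 2m·(f(n,m+1) − f(n,m))·(f(n,m) − f(n,m−1))/(f(n,m+1) − f(n,m−1)) for all n, m ≥ 1 (with nonzero denominators), together with its boundary versions in which the 2n-term is omitted when n = 0 and the 2m-term is omitted when m = 0; (iii) f(0,0) = 0, f(1,0) = 1, f(0,1) = i. Moreover it is the unique such function: any g : ℕ × ℕ → ℂ satisfying (i), (ii), (iii) equals f. -/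

import Mathlib

/-- `f : ℕ × ℕ → ℂ` is a discrete `Z^a` with `a = 1`: cross-ratio equation (with
nonzero differences), the constraint with `a = 1` (interior and boundary versions,
the `2n`-term omitted when `n = 0` and the `2m`-term omitted when `m = 0`), and
initial values `f(0,0) = 0`, `f(1,0) = 1`, `f(0,1) = i`. -/
def IsDiscreteZ1 (f : ℕ × ℕ → ℂ) : Prop :=
  (∀ n m : ℕ,
    f (n + 1, m) - f (n, m) ≠ 0 ∧ f (n, m + 1) - f (n, m) ≠ 0 ∧
    f (n + 1, m + 1) - f (n + 1, m) ≠ 0 ∧ f (n + 1, m + 1) - f (n, m + 1) ≠ 0 ∧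
    (f (n, m) - f (n + 1, m)) * (f (n + 1, m + 1) - f (n, m + 1)) =
      -((f (n + 1, m) - f (n + 1, m + 1)) * (f (n, m + 1) - f (n, m)))) ∧
  (∀ n m : ℕ,
    f (n + 2, m + 1) ≠ f (n, m + 1) ∧ f (n + 1, m + 2) ≠ f (n + 1, m) ∧
    f (n + 1, m + 1) =
      (2 * (n + 1) : ℂ) *
          ((f (n + 2, m + 1) - f (n + 1, m + 1)) * (f (n + 1, m + 1) - f (n, m + 1))) /
          (f (n + 2, m + 1) - f (n, m + 1)) +
        (2 * (m + 1) : ℂ) *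
          ((f (n + 1, m + 2) - f (n + 1, m + 1)) * (f (n + 1, m + 1) - f (n + 1, m))) /
          (f (n + 1, m + 2) - f (n + 1, m))) ∧
  (∀ n : ℕ,
    f (n + 2, 0) ≠ f (n, 0) ∧
    f (n + 1, 0) =
      (2 * (n + 1) : ℂ) * ((f (n + 2, 0) - f (n + 1, 0)) * (f (n + 1, 0) - f (n, 0))) /
        (f (n + 2, 0) - f (n, 0))) ∧
  (∀ m : ℕ,
    f (0, m + 2) ≠ f (0, m) ∧
    f (0, m + 1) =
      (2 * (m + 1) : ℂ) * ((f (0, m + 2) - f (0, m + 1)) * (f (0, m + 1) - f (0, m))) /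
        (f (0, m + 2) - f (0, m))) ∧
  f (0, 0) = 0 ∧ f (1, 0) = 1 ∧ f (0, 1) = Complex.I

/-!
Along the axes the constraint, once its denominator is cleared, is linear in the next value
with leading coefficient `(k + 1) w ≠ 0` (`w = 1` or `i`), so two-step induction forces
`f (k, 0) = k` and `f (0, k) = k i`. In the interior, the cross-ratio equation of a square with
vertices `z, z + 1, z + i` is linear in the fourth vertex with coefficient `1 + i`, which forces
it to be `z + 1 + i`; induction over the squares gives `f = n + i m` everywhere.
-/

open Complex

def gaussianGrid (p : ℕ × ℕ) : ℂ := p.1 + I * p.2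

@[simp]
lemma gaussianGrid_apply (n m : ℕ) : gaussianGrid (n, m) = n + I * m := rfl

lemma gaussianGrid_injective : Function.Injective gaussianGrid := by
  rintro ⟨n, m⟩ ⟨n', m'⟩ h
  simp only [gaussianGrid_apply, Complex.ext_iff] at h
  simp_all

lemma gaussianGrid_sub_ne_zero {p q : ℕ × ℕ} (h : p ≠ q) : gaussianGrid p - gaussianGrid q ≠ 0 :=
  sub_ne_zero.2 (gaussianGrid_injective.ne h)

lemma isDiscreteZ1_gaussianGrid : IsDiscreteZ1 gaussianGrid := by
  have hI : I ≠ 0 := I_ne_zero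
  refine ⟨fun n m => ⟨gaussianGrid_sub_ne_zero (by simp), gaussianGrid_sub_ne_zero (by simp),
      gaussianGrid_sub_ne_zero (by simp), gaussianGrid_sub_ne_zero (by simp), ?_⟩,
    fun n m => ⟨gaussianGrid_injective.ne (by simp), gaussianGrid_injective.ne (by simp), ?_⟩,
    fun n => ⟨gaussianGrid_injective.ne (by simp), ?_⟩,
    fun m => ⟨gaussianGrid_injective.ne (by simp), ?_⟩, by simp, by simp, by simp⟩
  all_goals
    simp only [gaussianGrid_apply]
    push_cast
  · linear_combination -I_sq
  · ring_nf; field_simp; ring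
  · field_simp; ring
  · ring_nf; field_simp; ring

theorem eq_natCast_mul_of_boundary_constraint {s : ℕ → ℂ} {w : ℂ} (hw : w ≠ 0)
    (h0 : s 0 = 0) (h1 : s 1 = w)
    (hs : ∀ k : ℕ, s (k + 2) ≠ s k ∧
      s (k + 1) = (2 * (k + 1) : ℂ) * ((s (k + 2) - s (k + 1)) * (s (k + 1) - s k)) /
        (s (k + 2) - s k))
    (k : ℕ) : s k = k * w := by
  induction k using Nat.twoStepInduction with
  | zero => simp [h0]
  | one => simp [h1]
  | more k ih ih' =>
    obtain ⟨hne, heq⟩ := hs k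
    rw [eq_div_iff (sub_ne_zero.2 hne), ih, ih'] at heq
    have hk : ((k : ℂ) + 1) * w ≠ 0 := mul_ne_zero (Nat.cast_add_one_ne_zero k) hw
    have : ((k : ℂ) + 1) * w * (s (k + 2) - (k + 2) * w) = 0 := by
      push_cast at heq
      linear_combination -heq
    push_cast
    exact sub_eq_zero.1 ((mul_eq_zero.1 this).resolve_left hk)

theorem eq_gaussianGrid_of_crossRatio {n m : ℕ} {x : ℂ}
    (h : (gaussianGrid (n, m) - gaussianGrid (n + 1, m)) * (x - gaussianGrid (n, m + 1)) =
      -((gaussianGrid (n + 1, m) - x) * (gaussianGrid (n, m + 1) - gaussianGrid (n, m)))) :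
    x = gaussianGrid (n + 1, m + 1) := by
  have h1I : (1 : ℂ) + I ≠ 0 := fun h => by simpa using congrArg re h
  simp only [gaussianGrid_apply] at h ⊢
  push_cast at h ⊢
  have : (1 + I) * (x - (n + 1 + I * (m + 1))) = 0 := by linear_combination -h - I_sq
  exact sub_eq_zero.1 ((mul_eq_zero.1 this).resolve_left h1I)

theorem eq_gaussianGrid_of_crossRatio_of_boundary {g : ℕ × ℕ → ℂ}
    (hcr : ∀ n m : ℕ, (g (n, m) - g (n + 1, m)) * (g (n + 1, m + 1) - g (n, m + 1)) =
      -((g (n + 1, m) - g (n + 1, m + 1)) * (g (n, m + 1) - g (n, m))))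
    (hrow : ∀ n : ℕ, g (n, 0) = gaussianGrid (n, 0))
    (hcol : ∀ m : ℕ, g (0, m) = gaussianGrid (0, m)) :
    g = gaussianGrid := by
  funext ⟨n, m⟩
  induction m generalizing n with
  | zero => exact hrow n
  | succ m ihm =>
    induction n with
    | zero => exact hcol (m + 1)
    | succ n ihn =>
      have h := hcr n m
      simp only [ihm, ihn] at h
      exact eq_gaussianGrid_of_crossRatio h

theorem eq_gaussianGrid_of_isDiscreteZ1 {g : ℕ × ℕ → ℂ} (hg : IsDiscreteZ1 g) :
    g = gaussianGrid := by
  obtain ⟨hcr, -, hrow, hcol, h00, h10, h01⟩ := hg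
  have row := eq_natCast_mul_of_boundary_constraint (s := fun k => g (k, 0))
    one_ne_zero h00 h10 hrow
  have col := eq_natCast_mul_of_boundary_constraint (s := fun k => g (0, k))
    I_ne_zero h00 h01 hcol
  exact eq_gaussianGrid_of_crossRatio_of_boundary (fun n m => (hcr n m).2.2.2.2)
    (fun n => by simp [row n]) (fun m => by simp [col m, mul_comm])

/-- The function `f(n,m) = n + i m` is the discrete `Z^a` for `a = 1`, and it is the
unique function with these properties. -/
theorem discrete_Z1_eq_n_add_im :
    IsDiscreteZ1 (fun p : ℕ × ℕ => (p.1 : ℂ) + Complex.I * (p.2 : ℂ)) ∧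
    ∀ g : ℕ × ℕ → ℂ, IsDiscreteZ1 g →
      g = fun p : ℕ × ℕ => (p.1 : ℂ) + Complex.I * (p.2 : ℂ) :=
  ⟨isDiscreteZ1_gaussianGrid, fun _ => eq_gaussianGrid_of_isDiscreteZ1⟩
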